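/- Let a > 0 and for R > 0 set T(R) = 2·∫_{R}^{∞} [√((ρ² + a²)/(ρ² − R²)) − 1] dρ − 2R. Then T(R) → 0 as R → ∞. -/

import Mathlib

/-!
Split the integrand as
`√((ρ² + a²)/(ρ² - R²)) - 1 = (ρ/√(ρ² - R²) - 1) + (√(ρ² + a²) - ρ)/√(ρ² - R²)`.
The first part has antiderivative `√(ρ² - R²) - ρ` and integrates to exactly `R`, which cancels
the `-2R`. The second part is nonnegative and, since `√(ρ² + a²) - ρ ≤ a²/(2ρ)`, is dominated by
`a²/2 · 1/(ρ√(ρ² - R²))`, whose integral over `(R, ∞)` is `π/(2R)` (antiderivative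
`arctan(√(ρ² - R²)/R)/R`). Hence `0 ≤ T(R) ≤ π a²/(2R)`.
-/

open MeasureTheory Filter Set Real Topology

noncomputable def timeOfFlight (a R : ℝ) : ℝ :=
  2 * (∫ ρ in Ioi R, (√((ρ ^ 2 + a ^ 2) / (ρ ^ 2 - R ^ 2)) - 1)) - 2 * R

section SqrtSqSubSq

variable {R ρ : ℝ}

lemma hasDerivAt_sqrt_sq_sub_sq (hρ : R ^ 2 < ρ ^ 2) :
    HasDerivAt (fun x => √(x ^ 2 - R ^ 2)) (ρ / √(ρ ^ 2 - R ^ 2)) ρ := by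
  convert ((hasDerivAt_pow 2 ρ).sub_const (R ^ 2)).sqrt (sub_pos.2 hρ).ne' using 1
  field_simp
  ring

lemma one_le_div_sqrt_sq_sub_sq (hR : 0 ≤ R) (hρ : R < ρ) : 1 ≤ ρ / √(ρ ^ 2 - R ^ 2) := by
  rw [one_le_div (sqrt_pos.2 (sub_pos.2 (pow_lt_pow_left₀ hρ hR two_ne_zero))),
    sqrt_le_left (hR.trans hρ.le)]
  exact sub_le_self _ (sq_nonneg R)

lemma tendsto_sqrt_sq_sub_sq_sub_self (R : ℝ) :
    Tendsto (fun x => √(x ^ 2 - R ^ 2) - x) atTop (𝓝 0) := by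
  have hsum : Tendsto (fun x => √(x ^ 2 - R ^ 2) + x) atTop atTop :=
    tendsto_atTop_mono (fun x => le_add_of_nonneg_left (sqrt_nonneg _)) tendsto_id
  -- `√(x² - R²) - x = -R² / (√(x² - R²) + x)` once `x > |R|`
  refine (tendsto_const_nhds (x := -R ^ 2)).div_atTop hsum |>.congr' ?_
  filter_upwards [eventually_gt_atTop |R|] with x hx
  have hRx : R ^ 2 < x ^ 2 := sq_lt_sq.2 (hx.trans_le (le_abs_self x))
  have hsq : √(x ^ 2 - R ^ 2) ^ 2 = x ^ 2 - R ^ 2 := sq_sqrt (sub_pos.2 hRx).le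
  have hx0 : 0 < x := (abs_nonneg R).trans_lt hx
  rw [div_eq_iff (by positivity)]
  nlinarith

lemma integrableOn_Ioi_div_sqrt_sq_sub_sq_sub_one (hR : 0 ≤ R) :
    IntegrableOn (fun ρ => ρ / √(ρ ^ 2 - R ^ 2) - 1) (Ioi R) :=
  integrableOn_Ioi_deriv_of_nonneg (by fun_prop)
    (fun ρ hρ =>
      (hasDerivAt_sqrt_sq_sub_sq (pow_lt_pow_left₀ hρ hR two_ne_zero)).sub (hasDerivAt_id ρ))
    (fun ρ hρ => sub_nonneg.2 (one_le_div_sqrt_sq_sub_sq hR hρ))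
    (tendsto_sqrt_sq_sub_sq_sub_self R)

lemma integral_Ioi_div_sqrt_sq_sub_sq_sub_one (hR : 0 ≤ R) :
    ∫ ρ in Ioi R, (ρ / √(ρ ^ 2 - R ^ 2) - 1) = R := by
  rw [integral_Ioi_of_hasDerivAt_of_nonneg (by fun_prop)
    (fun ρ hρ =>
      (hasDerivAt_sqrt_sq_sub_sq (pow_lt_pow_left₀ hρ hR two_ne_zero)).sub (hasDerivAt_id ρ))
    (fun ρ hρ => sub_nonneg.2 (one_le_div_sqrt_sq_sub_sq hR hρ))
    (tendsto_sqrt_sq_sub_sq_sub_self R)]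
  simp

lemma hasDerivAt_arctan_sqrt_sq_sub_sq_div (hR : 0 < R) (hρ : R < ρ) :
    HasDerivAt (fun x => arctan (√(x ^ 2 - R ^ 2) / R) / R)
      (ρ * √(ρ ^ 2 - R ^ 2))⁻¹ ρ := by
  have hRρ : R ^ 2 < ρ ^ 2 := pow_lt_pow_left₀ hρ hR.le two_ne_zero
  have hsq : √(ρ ^ 2 - R ^ 2) ^ 2 = ρ ^ 2 - R ^ 2 := sq_sqrt (sub_pos.2 hRρ).le
  have hρ0 : ρ ≠ 0 := (hR.trans hρ).ne'
  refine ((hasDerivAt_sqrt_sq_sub_sq hRρ).div_const R).arctan.div_const R |>.congr_deriv ?_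
  field_simp
  rw [hsq]
  ring

lemma tendsto_arctan_sqrt_sq_sub_sq_div (hR : 0 < R) :
    Tendsto (fun x => arctan (√(x ^ 2 - R ^ 2) / R) / R) atTop (𝓝 (π / (2 * R))) := by
  have hsq : Tendsto (fun x : ℝ => x ^ 2 - R ^ 2) atTop atTop :=
    tendsto_atTop_add_const_right _ _ (tendsto_pow_atTop two_ne_zero)
  have harg : Tendsto (fun x => √(x ^ 2 - R ^ 2) / R) atTop atTop :=
    (tendsto_sqrt_atTop.comp hsq).atTop_div_const hR
  rw [show π / (2 * R) = π / 2 / R by ring]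
  exact ((tendsto_nhds_of_tendsto_nhdsWithin tendsto_arctan_atTop).comp harg).div_const R

lemma integrableOn_Ioi_inv_mul_sqrt_sq_sub_sq (hR : 0 < R) :
    IntegrableOn (fun ρ => (ρ * √(ρ ^ 2 - R ^ 2))⁻¹) (Ioi R) :=
  integrableOn_Ioi_deriv_of_nonneg (by fun_prop)
    (fun _ hρ => hasDerivAt_arctan_sqrt_sq_sub_sq_div hR hρ)
    (fun _ hρ => inv_nonneg.2 (mul_nonneg (hR.trans hρ).le (sqrt_nonneg _)))
    (tendsto_arctan_sqrt_sq_sub_sq_div hR)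

lemma integral_Ioi_inv_mul_sqrt_sq_sub_sq (hR : 0 < R) :
    ∫ ρ in Ioi R, (ρ * √(ρ ^ 2 - R ^ 2))⁻¹ = π / (2 * R) := by
  rw [integral_Ioi_of_hasDerivAt_of_nonneg (by fun_prop)
    (fun _ hρ => hasDerivAt_arctan_sqrt_sq_sub_sq_div hR hρ)
    (fun _ hρ => inv_nonneg.2 (mul_nonneg (hR.trans hρ).le (sqrt_nonneg _)))
    (tendsto_arctan_sqrt_sq_sub_sq_div hR)]
  simp

end SqrtSqSubSq

section SqrtSqAddSq

variable {a R ρ : ℝ}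

lemma sqrt_sq_add_sq_sub_self_nonneg (a ρ : ℝ) : 0 ≤ √(ρ ^ 2 + a ^ 2) - ρ :=
  sub_nonneg.2 ((le_abs_self ρ).trans (abs_le_sqrt (by nlinarith)))

lemma sqrt_sq_add_sq_sub_self_le (hρ : 0 < ρ) : √(ρ ^ 2 + a ^ 2) - ρ ≤ a ^ 2 / 2 / ρ := by
  rw [sub_le_iff_le_add, sqrt_le_left (by positivity)]
  have : (a ^ 2 / 2 / ρ + ρ) ^ 2 = ρ ^ 2 + a ^ 2 + (a ^ 2 / 2 / ρ) ^ 2 := by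
    field_simp
    ring
  nlinarith [sq_nonneg (a ^ 2 / 2 / ρ)]

lemma sqrt_sq_add_sq_sub_self_div_sqrt_le (hR : 0 < R) (hρ : R < ρ) :
    (√(ρ ^ 2 + a ^ 2) - ρ) / √(ρ ^ 2 - R ^ 2)
      ≤ a ^ 2 / 2 * (ρ * √(ρ ^ 2 - R ^ 2))⁻¹ := by
  have hρ0 : 0 < ρ := hR.trans hρ
  calc (√(ρ ^ 2 + a ^ 2) - ρ) / √(ρ ^ 2 - R ^ 2)
      ≤ a ^ 2 / 2 / ρ / √(ρ ^ 2 - R ^ 2) :=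
        div_le_div_of_nonneg_right (sqrt_sq_add_sq_sub_self_le hρ0) (sqrt_nonneg _)
    _ = a ^ 2 / 2 * (ρ * √(ρ ^ 2 - R ^ 2))⁻¹ := by
        rw [mul_inv, div_div, div_eq_mul_inv, mul_inv]

lemma integrableOn_Ioi_sqrt_sq_add_sq_sub_self_div_sqrt (hR : 0 < R) :
    IntegrableOn (fun ρ => (√(ρ ^ 2 + a ^ 2) - ρ) / √(ρ ^ 2 - R ^ 2)) (Ioi R) := by
  refine ((integrableOn_Ioi_inv_mul_sqrt_sq_sub_sq hR).const_mul (a ^ 2 / 2)).mono'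
    (by fun_prop : Measurable _).aestronglyMeasurable ?_
  refine (ae_restrict_iff' measurableSet_Ioi).2 (Eventually.of_forall fun ρ hρ => ?_)
  rw [norm_of_nonneg (div_nonneg (sqrt_sq_add_sq_sub_self_nonneg a ρ) (sqrt_nonneg _))]
  exact sqrt_sq_add_sq_sub_self_div_sqrt_le hR hρ

lemma integral_Ioi_sqrt_sq_add_sq_sub_self_div_sqrt_le (hR : 0 < R) :
    ∫ ρ in Ioi R, (√(ρ ^ 2 + a ^ 2) - ρ) / √(ρ ^ 2 - R ^ 2)
      ≤ π * a ^ 2 / (4 * R) := calc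
  _ ≤ ∫ ρ in Ioi R, a ^ 2 / 2 * (ρ * √(ρ ^ 2 - R ^ 2))⁻¹ :=
      setIntegral_mono_on (integrableOn_Ioi_sqrt_sq_add_sq_sub_self_div_sqrt hR)
        ((integrableOn_Ioi_inv_mul_sqrt_sq_sub_sq hR).const_mul _) measurableSet_Ioi
        (fun _ hρ => sqrt_sq_add_sq_sub_self_div_sqrt_le hR hρ)
  _ = π * a ^ 2 / (4 * R) := by
      rw [integral_const_mul, integral_Ioi_inv_mul_sqrt_sq_sub_sq hR]
      ring

lemma sqrt_div_sub_one_eq (a R ρ : ℝ) :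
    √((ρ ^ 2 + a ^ 2) / (ρ ^ 2 - R ^ 2)) - 1
      = (ρ / √(ρ ^ 2 - R ^ 2) - 1) + (√(ρ ^ 2 + a ^ 2) - ρ) / √(ρ ^ 2 - R ^ 2) := by
  rw [sqrt_div (by positivity), sub_div]
  ring

lemma timeOfFlight_eq (hR : 0 < R) :
    timeOfFlight a R = 2 * ∫ ρ in Ioi R, (√(ρ ^ 2 + a ^ 2) - ρ) / √(ρ ^ 2 - R ^ 2) := by
  rw [timeOfFlight,
    setIntegral_congr_fun measurableSet_Ioi (fun ρ _ => sqrt_div_sub_one_eq a R ρ),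
    integral_add (integrableOn_Ioi_div_sqrt_sq_sub_sq_sub_one hR.le)
      (integrableOn_Ioi_sqrt_sq_add_sq_sub_self_div_sqrt hR),
    integral_Ioi_div_sqrt_sq_sub_sq_sub_one hR.le]
  ring

lemma timeOfFlight_nonneg (hR : 0 < R) : 0 ≤ timeOfFlight a R := by
  rw [timeOfFlight_eq hR]
  exact mul_nonneg zero_le_two (setIntegral_nonneg measurableSet_Ioi fun ρ _ =>
    div_nonneg (sqrt_sq_add_sq_sub_self_nonneg a ρ) (sqrt_nonneg _))

lemma timeOfFlight_le (hR : 0 < R) : timeOfFlight a R ≤ π * a ^ 2 / (2 * R) := by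
  rw [timeOfFlight_eq hR, show π * a ^ 2 / (2 * R) = 2 * (π * a ^ 2 / (4 * R)) by ring]
  gcongr
  exact integral_Ioi_sqrt_sq_add_sq_sub_self_div_sqrt_le hR

end SqrtSqAddSq

theorem wormhole_time_of_flight_tendsto_zero_general (a : ℝ) :
    Tendsto
      (fun R : ℝ =>
        2 * (∫ ρ in Set.Ioi R, (Real.sqrt ((ρ ^ 2 + a ^ 2) / (ρ ^ 2 - R ^ 2)) - 1))
          - 2 * R)
      atTop (nhds 0) := by
  refine squeeze_zero' (eventually_gt_atTop 0 |>.mono fun R hR => timeOfFlight_nonneg hR)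
    (eventually_gt_atTop 0 |>.mono fun R hR => timeOfFlight_le hR) ?_
  exact tendsto_const_nhds.div_atTop (tendsto_id.const_mul_atTop two_pos)

theorem wormhole_time_of_flight_tendsto_zero (a : ℝ) (ha : 0 < a) :
    Tendsto
      (fun R : ℝ =>
        2 * (∫ ρ in Set.Ioi R, (Real.sqrt ((ρ ^ 2 + a ^ 2) / (ρ ^ 2 - R ^ 2)) - 1))
          - 2 * R)
      atTop (nhds 0) :=
  wormhole_time_of_flight_tendsto_zero_general a
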